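/- arXiv:2407.18208 — 4 statements merged into one kernel-verified Lean document; each statement's English description precedes it below -/
import Mathlib

section
/- Let Λ be a Dedekind domain, M a finitely generated projective Λ-module of rank n, V a proper nonzero summand of M of rank k with k ≥ 2, L a rank-1 summand of V, and H a rank-(n−1) summand of M with H ⊕ L = M. Then the maps (P,Q) ↦ (P, Q ⊓ H) and (Z,W) ↦ (Z, W ⊕ L) are mutually inverse order isomorphisms between the poset X₀ = {(P,Q) ∈ S_M : P ⊆ H, Q ⊇ V} and the poset S_H(⊆, ⊇ H⊓V) = {(Z,W) : Z, W proper summands of H, Z ⊕ W = H, W ⊇ H ⊓ V}. -/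
open CategoryTheory OrderDual

/-- The rank of a finitely generated projective module over a domain: the dimension over the
fraction field of the base change to the fraction field. -/
noncomputable def rk (Λ : Type) [CommRing Λ] (M : Type) [AddCommGroup M] [Module Λ M] : ℕ :=
  Module.finrank (FractionRing Λ) (TensorProduct Λ (FractionRing Λ) M)

/-- The geometric realization (topological realization of the nerve) of a poset. -/
noncomputable def pReal (P : Type) [Preorder P] : TopCat :=
  SSet.toTop.obj (nerveFunctor.obj (Cat.of P))

/-- The map of geometric realizations induced by a map of posets. -/
noncomputable def pRealMap {P Q : Type} [Preorder P] [Preorder Q] (f : P →o Q) :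
    pReal P ⟶ pReal Q :=
  SSet.toTop.map (nerveFunctor.map f.monotone.functor.toCatHom)

/-- The base point of the `d`-dimensional sphere. -/
noncomputable def spherePt (d : ℕ) : Metric.sphere (0 : EuclideanSpace ℝ (Fin (d + 1))) 1 :=
  ⟨EuclideanSpace.single 0 1, by simp⟩

/-- The gluing relation for a wedge of spheres. -/
def WedgeRel (I : Type) (d : ℕ) :
    ((Σ _ : I, Metric.sphere (0 : EuclideanSpace ℝ (Fin (d + 1))) 1) ⊕ Unit) →
      ((Σ _ : I, Metric.sphere (0 : EuclideanSpace ℝ (Fin (d + 1))) 1) ⊕ Unit) → Prop :=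
  fun x y => ∃ i, x = Sum.inl ⟨i, spherePt d⟩ ∧ y = Sum.inr ()

/-- The wedge of `d`-dimensional spheres indexed by `I` (a one-point space if `I` is empty),
obtained by gluing the base points of all the spheres to a single point. -/
def WedgeOfSpheres (I : Type) (d : ℕ) : Type :=
  Quot (WedgeRel I d)

noncomputable instance (I : Type) (d : ℕ) : TopologicalSpace (WedgeOfSpheres I d) :=
  inferInstanceAs (TopologicalSpace (Quot (WedgeRel I d)))

/-- `X` is homotopy equivalent to a wedge of `d`-dimensional spheres
(over some, possibly empty, index set). -/
def HomotopyEquivToWedge (X : Type) [TopologicalSpace X] (d : ℕ) : Prop :=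
  ∃ I : Type, Nonempty (ContinuousMap.HomotopyEquiv X (WedgeOfSpheres I d))

section Posets

variable (Λ : Type) [CommRing Λ] (M : Type) [AddCommGroup M] [Module Λ M]

/-- The poset of pairs `(Z, W)` of proper summands of `N` with `Z ⊕ W = N`
(i.e. `Z ⊓ W = ⊥`, `Z ⊔ W = N`, `Z ≠ N`, `W ≠ N`), ordered by
`(Z, W) ≤ (Z', W')` iff `Z ⊆ Z'` and `W ⊇ W'`.  For `N = ⊤` this is the split building
poset `S_M`. -/
abbrev SPosetIn (N : Submodule Λ M) : Type :=
  {ZW : Submodule Λ M × (Submodule Λ M)ᵒᵈ //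
    ZW.1 ⊓ ofDual ZW.2 = ⊥ ∧ ZW.1 ⊔ ofDual ZW.2 = N ∧ ZW.1 ≠ N ∧ ofDual ZW.2 ≠ N}

/-- The poset `T_M` of proper nonzero summands of `M`, ordered by inclusion. -/
abbrev TPoset : Type :=
  {P : Submodule Λ M // (∃ Q, P ⊓ Q = ⊥ ∧ P ⊔ Q = ⊤) ∧ P ≠ ⊥ ∧ P ≠ ⊤}

end Posets

/-! In the modular lattice of submodules, `H ⊕ L = M` makes `W ↦ W ⊔ L` and `Q ↦ Q ⊓ H` inverse
order isomorphisms between the submodules below `H` and those above `L`, and these maps carry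
complements in `H` to complements in `M` and back. The only point needing ranks is properness of
`P` in `H`: `P = H` would force `Q = L`, impossible since `L < V ≤ Q` (rank `1 < k`). -/

section SplitPairs

variable {α : Type*} [Lattice α] [BoundedOrder α]

def IsProperSplit (N Z W : α) : Prop :=
  Z ⊓ W = ⊥ ∧ Z ⊔ W = N ∧ Z ≠ N ∧ W ≠ N

-- For submodules, `ProperSplitPairs N` is definitionally `SPosetIn Λ M N`.
abbrev ProperSplitPairs (N : α) : Type _ :=
  {ZW : α × αᵒᵈ // IsProperSplit N ZW.1 (ofDual ZW.2)}

theorem IsProperSplit.left_le {N Z W : α} (h : IsProperSplit N Z W) : Z ≤ N :=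
  h.2.1 ▸ le_sup_left

theorem IsProperSplit.right_le {N Z W : α} (h : IsProperSplit N Z W) : W ≤ N :=
  h.2.1 ▸ le_sup_right

variable [IsModularLattice α] {H L : α}

theorem IsCompl.inf_sup_eq_self_of_le (hHL : IsCompl H L) {Q : α} (hLQ : L ≤ Q) :
    Q ⊓ H ⊔ L = Q := by
  rw [inf_sup_assoc_of_le _ hLQ, hHL.sup_eq_top, inf_top_eq]

theorem IsCompl.sup_inf_eq_self_of_le (hHL : IsCompl H L) {W : α} (hWH : W ≤ H) :
    (W ⊔ L) ⊓ H = W := by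
  rw [sup_inf_assoc_of_le _ hWH, inf_comm, hHL.inf_eq_bot, sup_bot_eq]

theorem IsCompl.inf_le_inf_iff_of_le (hHL : IsCompl H L) {Q Q' : α} (hLQ : L ≤ Q)
    (hLQ' : L ≤ Q') : Q ⊓ H ≤ Q' ⊓ H ↔ Q ≤ Q' := by
  refine ⟨fun h => ?_, fun h => inf_le_inf_right H h⟩
  rw [← hHL.inf_sup_eq_self_of_le hLQ, ← hHL.inf_sup_eq_self_of_le hLQ']
  exact sup_le_sup_right h L

theorem IsProperSplit.inf_right (hHL : IsCompl H L) {P Q : α} (hPQ : IsProperSplit ⊤ P Q)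
    (hPH : P ≤ H) (hLQ : L < Q) : IsProperSplit H P (Q ⊓ H) := by
  obtain ⟨hinf, hsup, hP, hQ⟩ := hPQ
  refine ⟨?_, ?_, ?_, ?_⟩
  · exact le_bot_iff.mp (hinf ▸ inf_le_inf_left P inf_le_left)
  · rw [← sup_inf_assoc_of_le _ hPH, hsup, top_inf_eq]
  · rintro rfl
    refine hLQ.ne ?_
    rw [← hHL.inf_sup_eq_self_of_le hLQ.le, inf_comm, hinf, bot_sup_eq]
  · intro hHQ
    have hP0 : P = ⊥ := le_bot_iff.mp (hinf ▸ le_inf le_rfl (hPH.trans (inf_eq_right.mp hHQ)))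
    exact hQ (by rw [← hsup, hP0, bot_sup_eq])

theorem IsProperSplit.sup_right (hHL : IsCompl H L) {Z W : α} (hZW : IsProperSplit H Z W) :
    IsProperSplit ⊤ Z (W ⊔ L) := by
  have hZH := hZW.left_le
  have hWH := hZW.right_le
  obtain ⟨hinf, hsup, hZ, hW⟩ := hZW
  refine ⟨?_, ?_, ?_, ?_⟩
  · rw [← inf_eq_left.mpr hZH, inf_assoc, inf_comm H, hHL.sup_inf_eq_self_of_le hWH, hinf]
  · rw [← sup_assoc, hsup, hHL.sup_eq_top]
  · rintro rfl
    exact hZ (top_le_iff.mp hZH).symm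
  · intro hWL
    exact hW (by rw [← hHL.sup_inf_eq_self_of_le hWH, hWL, top_inf_eq])

def properSplitPairsRestrictIso (hHL : IsCompl H L) {V : α} (hLV : L < V) :
    {x : ProperSplitPairs (⊤ : α) // x.1.1 ≤ H ∧ V ≤ ofDual x.1.2} ≃o
      {y : ProperSplitPairs H // H ⊓ V ≤ ofDual y.1.2} where
  toFun x :=
    ⟨⟨(x.1.1.1, toDual (ofDual x.1.1.2 ⊓ H)), x.1.2.inf_right hHL x.2.1 (hLV.trans_le x.2.2)⟩,
      inf_comm H V ▸ inf_le_inf_right H x.2.2⟩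
  invFun y :=
    ⟨⟨(y.1.1.1, toDual (ofDual y.1.1.2 ⊔ L)), y.1.2.sup_right hHL⟩,
      y.1.2.left_le, calc
        V = H ⊓ V ⊔ L := by rw [inf_comm, hHL.inf_sup_eq_self_of_le hLV.le]
        _ ≤ ofDual y.1.1.2 ⊔ L := sup_le_sup_right y.2 L⟩
  left_inv x := by
    ext : 3
    · rfl
    · exact hHL.inf_sup_eq_self_of_le (hLV.le.trans x.2.2)
  right_inv y := by
    ext : 3
    · rfl
    · exact hHL.sup_inf_eq_self_of_le y.1.2.right_le
  map_rel_iff' {x x'} :=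
    and_congr Iff.rfl
      (hHL.inf_le_inf_iff_of_le (hLV.le.trans x'.2.2) (hLV.le.trans x.2.2))

end SplitPairs

theorem statement4_general (Λ : Type) [CommRing Λ]
    (M : Type) [AddCommGroup M] [Module Λ M]
    (k : ℕ) (V : Submodule Λ M)
    (hVrk : rk Λ ↥V = k) (hk2 : 2 ≤ k)
    (L : Submodule Λ M) (hLV : L ≤ V)
    (hLrk : rk Λ ↥L = 1)
    (H : Submodule Λ M) (hHL : H ⊓ L = ⊥) (hHLtop : H ⊔ L = ⊤) :
    ∃ e : {x : SPosetIn Λ M ⊤ // x.1.1 ≤ H ∧ V ≤ ofDual x.1.2} ≃o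
        {y : SPosetIn Λ M H // H ⊓ V ≤ ofDual y.1.2},
      (∀ x, (e x).1.1.1 = x.1.1.1 ∧ ofDual (e x).1.1.2 = ofDual x.1.1.2 ⊓ H) ∧
      (∀ y, (e.symm y).1.1.1 = y.1.1.1 ∧ ofDual (e.symm y).1.1.2 = ofDual y.1.1.2 ⊔ L) := by
  have hLltV : L < V := hLV.lt_of_ne (by rintro rfl; omega)
  exact ⟨properSplitPairsRestrictIso ⟨disjoint_iff.mpr hHL, codisjoint_iff.mpr hHLtop⟩ hLltV,
    fun _ => ⟨rfl, rfl⟩, fun _ => ⟨rfl, rfl⟩⟩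

/-- Claim 1 (the isomorphism): `(P,Q) ↦ (P, Q ⊓ H)` and `(Z,W) ↦ (Z, W ⊔ L)` are mutually
inverse order isomorphisms `X₀ ≃o S_H(⊆, ⊇ H ⊓ V)`. -/
theorem statement4 (Λ : Type) [CommRing Λ] [IsDedekindDomain Λ]
    (M : Type) [AddCommGroup M] [Module Λ M] [Module.Finite Λ M] [Module.Projective Λ M]
    (n : ℕ) (hn : rk Λ M = n) (k : ℕ) (V : Submodule Λ M) (hVsum : ∃ W, V ⊓ W = ⊥ ∧ V ⊔ W = ⊤)
    (hV0 : V ≠ ⊥) (hVtop : V ≠ ⊤) (hVrk : rk Λ ↥V = k) (hk2 : 2 ≤ k)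
    (L : Submodule Λ M) (hLV : L ≤ V) (hLsum : ∃ L', L ⊓ L' = ⊥ ∧ L ⊔ L' = V)
    (hLrk : rk Λ ↥L = 1)
    (H : Submodule Λ M) (hHrk : rk Λ ↥H = n - 1) (hHL : H ⊓ L = ⊥) (hHLtop : H ⊔ L = ⊤) :
    ∃ e : {x : SPosetIn Λ M ⊤ // x.1.1 ≤ H ∧ V ≤ ofDual x.1.2} ≃o
        {y : SPosetIn Λ M H // H ⊓ V ≤ ofDual y.1.2},
      (∀ x, (e x).1.1.1 = x.1.1.1 ∧ ofDual (e x).1.1.2 = ofDual x.1.1.2 ⊓ H) ∧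
      (∀ y, (e.symm y).1.1.1 = y.1.1.1 ∧ ofDual (e.symm y).1.1.2 = ofDual y.1.1.2 ⊔ L) :=
  statement4_general Λ M k V hVrk hk2 L hLV hLrk H hHL hHLtop
end

section
/- Let Λ be a Dedekind domain, M a finitely generated projective Λ-module of rank n, V a proper nonzero summand of M of rank k with k ≥ 2, L a rank-1 summand of V, and H a rank-(n−1) summand of M with H ⊕ L = M. Set X = S_M(⊆, ⊇V), X₀ = {(P,Q) ∈ X : P ⊆ H}, T_j = {(A,B) ∈ X : rank(A) = n−k−1−j and A ⊄ H}, and X_i = X₀ ∪ T₀ ∪ ⋯ ∪ T_i. Then for every i ≥ 1 and every (A,B) ∈ T_i, one has Link^<_X(A,B) ∩ X_{i−1} = {(P,Q) ∈ X : P ⊆ A ⊓ H and Q ⊋ B}. -/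
/-!
Below `(A, B)` the second component grows strictly, since by the modular law a pair `(P, B)`
with `P ⊆ A` is `(A, B)` itself. The first component lies in `H`: a pair of `T_j`, `j < i`,
below `(A, B)` has as first component a nonzero submodule of `A` of rank `n - k - 1 - j`, which
exceeds `rank A = n - k - 1 - i ≥ 1`; this is absurd since `Frac Λ` is flat over `Λ`, so rank is
monotone along injections.
-/

open CategoryTheory OrderDual

section Filtration

variable (Λ : Type) [CommRing Λ] (M : Type) [AddCommGroup M] [Module Λ M]

/-- The poset `X = S_M(⊆, ⊇V)` of pairs `(P, Q) ∈ S_M` with `Q ⊇ V`. -/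
abbrev XT (V : Submodule Λ M) : Type :=
  {x : SPosetIn Λ M ⊤ // V ≤ ofDual x.1.2}

/-- `X₀ = S_M(⊆H, ⊇V)`, the set of `(P, Q) ∈ X` with `P ⊆ H`. -/
def X0set (V H : Submodule Λ M) : Set (XT Λ M V) :=
  {x | x.1.1.1 ≤ H}

/-- `T_j`, the set of `(A, B) ∈ X` with `rank A = n - k - 1 - j` and `A ⊄ H`. -/
def Tset (V H : Submodule Λ M) (n k j : ℕ) : Set (XT Λ M V) :=
  {x | rk Λ ↥(x.1.1.1) = n - k - 1 - j ∧ ¬ x.1.1.1 ≤ H}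

/-- `X_i = X₀ ∪ T₀ ∪ ⋯ ∪ T_i`. -/
def Xset (V H : Submodule Λ M) (n k i : ℕ) : Set (XT Λ M V) :=
  X0set Λ M V H ∪ ⋃ j ≤ i, Tset Λ M V H n k j

end Filtration

section Rank

variable {Λ : Type} [CommRing Λ] [IsDomain Λ]

lemma rk_le_of_injective {N P : Type} [AddCommGroup N] [Module Λ N] [AddCommGroup P]
    [Module Λ P] [Module.Finite Λ P] (f : N →ₗ[Λ] P) (hf : Function.Injective f) :
    rk Λ N ≤ rk Λ P :=
  LinearMap.finrank_le_finrank_of_injective (f := f.baseChange (FractionRing Λ)) <| by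
    simpa only [LinearMap.baseChange_eq_ltensor] using
      Module.Flat.lTensor_preserves_injective_linearMap f hf

lemma rk_self : rk Λ Λ = 1 :=
  (Algebra.TensorProduct.rid Λ (FractionRing Λ) (FractionRing Λ)).toLinearEquiv.finrank_eq.trans
    (Module.finrank_self _)

variable {M : Type} [AddCommGroup M] [Module Λ M]

lemma one_le_rk_of_ne_bot [Module.IsTorsionFree Λ M] {P : Submodule Λ M} [Module.Finite Λ P]
    (hP : P ≠ ⊥) : 1 ≤ rk Λ P := by
  obtain ⟨p, hpP, hp0⟩ := Submodule.exists_mem_ne_zero_of_ne_bot hP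
  have hinj : Function.Injective (LinearMap.toSpanSingleton Λ P ⟨p, hpP⟩) := fun a b hab =>
    smul_left_injective Λ hp0 (congrArg Subtype.val hab)
  exact rk_self.symm.le.trans (rk_le_of_injective _ hinj)

lemma rk_mono [IsNoetherianRing Λ] [Module.Finite Λ M] {P A : Submodule Λ M} (h : P ≤ A) :
    rk Λ P ≤ rk Λ A :=
  rk_le_of_injective _ (Submodule.inclusion_injective h)

end Rank

lemma SPosetIn.lt_iff {Λ M : Type} [CommRing Λ] [AddCommGroup M] [Module Λ M]
    {N : Submodule Λ M} {x y : SPosetIn Λ M N} :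
    y < x ↔ y.1.1 ≤ x.1.1 ∧ ofDual x.1.2 < ofDual y.1.2 := by
  refine ⟨fun hlt => ⟨hlt.le.1, lt_of_le_of_ne hlt.le.2 fun hsnd => hlt.ne ?_⟩,
    fun ⟨hfst, hsnd⟩ => lt_of_le_of_ne ⟨hfst, hsnd.le⟩ fun h => hsnd.ne (by rw [h])⟩
  have hfst : y.1.1 = x.1.1 := eq_of_le_of_inf_le_of_sup_le hlt.le.1
    (by rw [x.2.1, hsnd]; exact bot_le) (by rw [x.2.2.1, hsnd, y.2.2.1])
  exact Subtype.ext (Prod.ext hfst (congrArg toDual hsnd).symm)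

lemma fst_le_of_mem_Xset {Λ M : Type} [CommRing Λ] [IsDomain Λ] [IsNoetherianRing Λ]
    [AddCommGroup M] [Module Λ M] [Module.Finite Λ M] [Module.IsTorsionFree Λ M]
    {V H : Submodule Λ M} {n k i : ℕ} (hi : 1 ≤ i) {x y : XT Λ M V}
    (hx : x ∈ Tset Λ M V H n k i) (hy : y ∈ Xset Λ M V H n k (i - 1))
    (hyx : y.1.1.1 ≤ x.1.1.1) : y.1.1.1 ≤ H := by
  obtain hy0 | hyT := hy
  · exact hy0
  obtain ⟨j, hj, hyrk, hyH⟩ : ∃ j ≤ i - 1, y ∈ Tset Λ M V H n k j := by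
    simpa only [Set.mem_iUnion, exists_prop] using hyT
  have hpos : 1 ≤ rk Λ y.1.1.1 := one_le_rk_of_ne_bot fun h => hyH (h.le.trans bot_le)
  have hle : rk Λ y.1.1.1 ≤ rk Λ x.1.1.1 := rk_mono hyx
  have hxrk := hx.1
  omega

theorem statement9_general (Λ : Type) [CommRing Λ] [IsDedekindDomain Λ]
    (M : Type) [AddCommGroup M] [Module Λ M] [Module.Finite Λ M] [Module.Projective Λ M]
    (n : ℕ) (k : ℕ) (V : Submodule Λ M)
    (H : Submodule Λ M)
    (i : ℕ) (hi : 1 ≤ i) (x : XT Λ M V) (hx : x ∈ Tset Λ M V H n k i) :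
    {y : XT Λ M V | y < x} ∩ Xset Λ M V H n k (i - 1) =
      {y : XT Λ M V | y.1.1.1 ≤ x.1.1.1 ⊓ H ∧ ofDual x.1.1.2 < ofDual y.1.1.2} := by
  ext y
  change y.1 < x.1 ∧ _ ↔ _
  rw [SPosetIn.lt_iff]
  constructor
  · rintro ⟨⟨hPA, hBQ⟩, hy⟩
    exact ⟨le_inf hPA (fst_le_of_mem_Xset hi hx hy hPA), hBQ⟩
  · rintro ⟨hPAH, hBQ⟩
    exact ⟨⟨hPAH.trans inf_le_left, hBQ⟩, Or.inl (hPAH.trans inf_le_right)⟩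

/-- Claim 3 (first part): for `(A,B) ∈ T_i` one has
`Link^<_X(A,B) ∩ X_(i-1) = {(P,Q) ∈ X : P ⊆ A ⊓ H, Q ⊋ B}`. -/
theorem statement9 (Λ : Type) [CommRing Λ] [IsDedekindDomain Λ]
    (M : Type) [AddCommGroup M] [Module Λ M] [Module.Finite Λ M] [Module.Projective Λ M]
    (n : ℕ) (hn : rk Λ M = n) (k : ℕ) (V : Submodule Λ M) (hVsum : ∃ W, V ⊓ W = ⊥ ∧ V ⊔ W = ⊤)
    (hV0 : V ≠ ⊥) (hVtop : V ≠ ⊤) (hVrk : rk Λ ↥V = k) (hk2 : 2 ≤ k)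
    (L : Submodule Λ M) (hLV : L ≤ V) (hLsum : ∃ L', L ⊓ L' = ⊥ ∧ L ⊔ L' = V)
    (hLrk : rk Λ ↥L = 1)
    (H : Submodule Λ M) (hHrk : rk Λ ↥H = n - 1) (hHL : H ⊓ L = ⊥) (hHLtop : H ⊔ L = ⊤)
    (i : ℕ) (hi : 1 ≤ i) (x : XT Λ M V) (hx : x ∈ Tset Λ M V H n k i) :
    {y : XT Λ M V | y < x} ∩ Xset Λ M V H n k (i - 1) =
      {y : XT Λ M V | y.1.1.1 ≤ x.1.1.1 ⊓ H ∧ ofDual x.1.1.2 < ofDual y.1.1.2} :=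
  statement9_general Λ M n k V H i hi x hx
end

section
/- Let Λ be a Dedekind domain, M a finitely generated projective Λ-module of rank n, V a proper nonzero summand of M of rank k with k ≥ 2, and H a rank-(n−1) summand of M with V ⊄ H. Let X = S_M(⊆, ⊇V) and let (A,B) ∈ X with A ⊄ H. Then the maps (P,Q) ↦ (P, Q ⊓ A) and (Z,W) ↦ (Z, W ⊕ B) are mutually inverse order isomorphisms between the poset {(P,Q) ∈ X : P ⊆ A ⊓ H, Q ⊋ B} and the poset S_A(⊆ H⊓A, ⊇) = {(Z,W) : Z, W proper summands of A, Z ⊕ W = A, Z ⊆ H ⊓ A}. -/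
open CategoryTheory OrderDual

/-!
Since `A ⊕ B = M` and submodules form a modular lattice, `Q ↦ Q ⊓ A` and `W ↦ W ⊔ B` are inverse
order isomorphisms between the intervals `[B, M]` and `[0, A]` (the diamond isomorphism), sending
`M ↦ A` and `B ↦ 0`. For `P ⊆ A` they carry the complements of `P` in `M` onto the complements of
`P` in `A`, and `A ⊄ H` keeps every `P ⊆ H ⊓ A` proper.
-/

namespace IsCompl

variable {α : Type*} [Lattice α] [BoundedOrder α] [IsModularLattice α] {a b : α}

theorem inf_sup_cancel_of_le (h : IsCompl a b) {q : α} (hq : b ≤ q) : q ⊓ a ⊔ b = q := by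
  rw [sup_comm, inf_comm, ← sup_inf_assoc_of_le _ hq, sup_comm, h.sup_eq_top, top_inf_eq]

theorem sup_inf_cancel_of_le (h : IsCompl a b) {w : α} (hw : w ≤ a) : (w ⊔ b) ⊓ a = w := by
  rw [sup_inf_assoc_of_le _ hw, inf_comm, h.inf_eq_bot, sup_bot_eq]

theorem inf_le_inf_right_iff (h : IsCompl a b) {q q' : α} (hq : b ≤ q) (hq' : b ≤ q') :
    q ⊓ a ≤ q' ⊓ a ↔ q ≤ q' := by
  refine ⟨fun hle => ?_, fun hle => inf_le_inf_right a hle⟩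
  rw [← h.inf_sup_cancel_of_le hq, ← h.inf_sup_cancel_of_le hq']
  exact sup_le_sup_right hle b

theorem inf_sup_eq_inf_of_le (h : IsCompl a b) {p w : α} (hp : p ≤ a) (hw : w ≤ a) :
    p ⊓ (w ⊔ b) = p ⊓ w := by
  nth_rw 1 [← inf_eq_left.mpr hp]
  rw [inf_assoc, inf_comm a, h.sup_inf_cancel_of_le hw]

end IsCompl

section SplitBuilding

variable {Λ : Type} [CommRing Λ] {M : Type} [AddCommGroup M] [Module Λ M]
  {V H A b : Submodule Λ M}

def XT.restrictIso (hAb : IsCompl A b) (hVb : V ≤ b) (hA : ¬ A ≤ H) :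
    {y : XT Λ M V // y.1.1.1 ≤ A ⊓ H ∧ b < ofDual y.1.1.2} ≃o
      {z : SPosetIn Λ M A // z.1.1 ≤ H ⊓ A} where
  toFun y :=
    have hPA : y.1.1.1.1 ≤ A := y.2.1.trans inf_le_left
    ⟨⟨(y.1.1.1.1, toDual (ofDual y.1.1.1.2 ⊓ A)),
      eq_bot_iff.2 <| (inf_le_inf_left _ inf_le_left).trans y.1.1.2.1.le,
      by dsimp only [ofDual_toDual]; rw [← sup_inf_assoc_of_le _ hPA, y.1.1.2.2.1, top_inf_eq],
      fun hPeq => hA (hPeq ▸ y.2.1.trans inf_le_right),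
      fun hQA => y.1.1.2.2.2.2 <| by
        dsimp only [ofDual_toDual] at hQA
        rw [← hAb.inf_sup_cancel_of_le y.2.2.le, hQA, hAb.sup_eq_top]⟩,
     le_inf (y.2.1.trans inf_le_right) hPA⟩
  invFun z :=
    have hZA : z.1.1.1 ≤ A := le_sup_left.trans_eq z.1.2.2.1
    have hWA : ofDual z.1.1.2 ≤ A := le_sup_right.trans_eq z.1.2.2.1
    ⟨⟨⟨(z.1.1.1, toDual (ofDual z.1.1.2 ⊔ b)),
      by dsimp only [ofDual_toDual]; rw [hAb.inf_sup_eq_inf_of_le hZA hWA, z.1.2.1],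
      by dsimp only [ofDual_toDual]; rw [← sup_assoc, z.1.2.2.1, hAb.sup_eq_top],
      fun hZ => hA <| le_top.trans_eq hZ.symm |>.trans (z.2.trans inf_le_left),
      fun hW => z.1.2.2.2.2 <| by
        dsimp only [ofDual_toDual] at hW
        rw [← hAb.sup_inf_cancel_of_le hWA, hW, top_inf_eq]⟩,
     hVb.trans le_sup_right⟩,
     le_inf hZA (z.2.trans inf_le_left),
     lt_of_le_of_ne le_sup_right fun hbW => z.1.2.2.2.1 <| by
      dsimp only [ofDual_toDual] at hbW
      have hW : ofDual z.1.1.2 = ⊥ := by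
        rw [← hAb.sup_inf_cancel_of_le hWA, ← hbW, inf_comm, hAb.inf_eq_bot]
      simpa [hW] using z.1.2.2.1⟩
  left_inv y := Subtype.ext <| Subtype.ext <| Subtype.ext <| Prod.ext rfl <|
    congrArg toDual (hAb.inf_sup_cancel_of_le y.2.2.le)
  right_inv z := Subtype.ext <| Subtype.ext <| Prod.ext rfl <|
    congrArg toDual (hAb.sup_inf_cancel_of_le (le_sup_right.trans_eq z.1.2.2.1))
  map_rel_iff' {y₁ y₂} := and_congr_right' (hAb.inf_le_inf_right_iff y₂.2.2.le y₁.2.2.le)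

end SplitBuilding

theorem statement10_general (Λ : Type) [CommRing Λ]
    (M : Type) [AddCommGroup M] [Module Λ M] (V : Submodule Λ M)
    (H : Submodule Λ M) (x : XT Λ M V) (hA : ¬ x.1.1.1 ≤ H) :
    ∃ e : {y : XT Λ M V //
            y.1.1.1 ≤ x.1.1.1 ⊓ H ∧ ofDual x.1.1.2 < ofDual y.1.1.2} ≃o
        {z : SPosetIn Λ M (x.1.1.1) // z.1.1 ≤ H ⊓ x.1.1.1},
      (∀ y, (e y).1.1.1 = y.1.1.1.1 ∧
        ofDual (e y).1.1.2 = ofDual y.1.1.1.2 ⊓ x.1.1.1) ∧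
      (∀ z, (e.symm z).1.1.1.1 = z.1.1.1 ∧
        ofDual (e.symm z).1.1.1.2 = ofDual z.1.1.2 ⊔ ofDual x.1.1.2) :=
  ⟨XT.restrictIso (IsCompl.of_eq x.1.2.1 x.1.2.2.1) x.2 hA,
    fun _ => ⟨rfl, rfl⟩, fun _ => ⟨rfl, rfl⟩⟩

/-- Claim 3 (the isomorphism): `(P,Q) ↦ (P, Q ⊓ A)` and `(Z,W) ↦ (Z, W ⊔ B)` are mutually
inverse order isomorphisms `{(P,Q) ∈ X : P ⊆ A ⊓ H, Q ⊋ B} ≃o S_A(⊆ H ⊓ A, ⊇)`. -/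
theorem statement10 (Λ : Type) [CommRing Λ] [IsDedekindDomain Λ]
    (M : Type) [AddCommGroup M] [Module Λ M] [Module.Finite Λ M] [Module.Projective Λ M]
    (n : ℕ) (hn : rk Λ M = n) (k : ℕ) (V : Submodule Λ M) (hVsum : ∃ W, V ⊓ W = ⊥ ∧ V ⊔ W = ⊤)
    (hV0 : V ≠ ⊥) (hVtop : V ≠ ⊤) (hVrk : rk Λ ↥V = k) (hk2 : 2 ≤ k)
    (H : Submodule Λ M) (hHsum : ∃ W, H ⊓ W = ⊥ ∧ H ⊔ W = ⊤) (hHrk : rk Λ ↥H = n - 1)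
    (hVH : ¬ V ≤ H)
    (x : XT Λ M V) (hA : ¬ x.1.1.1 ≤ H) :
    ∃ e : {y : XT Λ M V //
            y.1.1.1 ≤ x.1.1.1 ⊓ H ∧ ofDual x.1.1.2 < ofDual y.1.1.2} ≃o
        {z : SPosetIn Λ M (x.1.1.1) // z.1.1 ≤ H ⊓ x.1.1.1},
      (∀ y, (e y).1.1.1 = y.1.1.1.1 ∧
        ofDual (e y).1.1.2 = ofDual y.1.1.1.2 ⊓ x.1.1.1) ∧
      (∀ z, (e.symm z).1.1.1.1 = z.1.1.1 ∧
        ofDual (e.symm z).1.1.1.2 = ofDual z.1.1.2 ⊔ ofDual x.1.1.2) :=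
  statement10_general Λ M V H x hA
end

section
/- Let Λ be a Dedekind domain, M a finitely generated projective Λ-module of rank n, and V a proper nonzero summand of M of rank k. Then the height of V in the opposite poset T_M^op of the poset T_M of proper nonzero summands of M ordered by inclusion equals n−k−1; equivalently, the maximal length h of a chain of proper nonzero summands A_0 ⊋ A_1 ⊋ ⋯ ⊋ A_h = V of M is h = n−k−1. -/
open CategoryTheory OrderDual

/-!
Over a Dedekind domain a finitely generated torsion-free module is flat, hence projective, so a
submodule `L ⊆ M` whose quotient is torsion-free is a summand. Rank is strictly monotone on
summands (by modularity, `A < B` splits as `B = A ⊕ (B ⊓ C)` for a complement `C` of `A`), so a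
chain `V = A₀ < ⋯ < A_h` of proper summands has `h ≤ (n - 1) - k`. Conversely a proper summand `A`
of rank `< n - 1` lies in a summand of rank one more: the saturation of `A + Λ w`, for a nonzero
`w` in a complement of `A`.
-/

open Module Submodule Order

theorem isComplemented_iff_exists_inf_eq_bot_and_sup_eq_top {α : Type*} [Lattice α]
    [BoundedOrder α] {a : α} : IsComplemented a ↔ ∃ b, a ⊓ b = ⊥ ∧ a ⊔ b = ⊤ := by
  simp only [IsComplemented, isCompl_iff, disjoint_iff, codisjoint_iff]

theorem rk_eq_finrank (R N : Type) [CommRing R] [IsDomain R] [AddCommGroup N] [Module R N] :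
    rk R N = finrank R N :=
  (TensorProduct.isBaseChange R N (FractionRing R)).finrank_eq

namespace Order

variable {α : Type*} [Preorder α] {f : α → ℕ} {N : ℕ}

theorem coheight_le_of_strictMono_nat (hf : StrictMono f) (hle : ∀ a, f a ≤ N) (a : α) :
    coheight a ≤ (N - f a : ℕ) := by
  refine coheight_le fun p hp => ?_
  have hlen := LTSeries.head_add_length_le_nat (p.map f hf)
  rw [LTSeries.head_map, LTSeries.last_map, hp] at hlen
  have hmap : (p.map f hf).length = p.length := rfl
  have := hle p.last
  exact_mod_cast (show p.length ≤ N - f a by omega)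

theorem le_coheight_of_exists_gt_eq_succ (hstep : ∀ a, f a < N → ∃ b, a < b ∧ f b = f a + 1)
    (a : α) : ((N - f a : ℕ) : ℕ∞) ≤ coheight a := by
  suffices ∀ j : ℕ, ∀ a, j ≤ N - f a → (j : ℕ∞) ≤ coheight a from this _ a le_rfl
  intro j
  induction j with
  | zero => simp
  | succ j ih =>
    intro a ha
    obtain ⟨b, hab, hb⟩ := hstep a (by omega)
    calc ((j + 1 : ℕ) : ℕ∞) = j + 1 := by push_cast; rfl
      _ ≤ coheight b + 1 := by gcongr; exact ih b (by omega)
      _ ≤ coheight a := coheight_add_one_le hab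

end Order

namespace Submodule

section Rank

variable {R M : Type*} [CommRing R] [IsDomain R] [AddCommGroup M] [Module R M]

theorem finrank_sup_of_disjoint [IsNoetherian R M] {p q : Submodule R M} (h : Disjoint p q) :
    finrank R ↥(p ⊔ q) = finrank R p + finrank R q := by
  have key := rank_sup_add_rank_inf_eq p q
  rw [h.eq_bot, rank_bot, add_zero, ← finrank_eq_rank, ← finrank_eq_rank,
    ← finrank_eq_rank] at key
  exact_mod_cast key

theorem finrank_add_finrank_of_isCompl [IsNoetherian R M] {p q : Submodule R M}
    (h : IsCompl p q) : finrank R p + finrank R q = finrank R M := by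
  rw [← finrank_sup_of_disjoint h.disjoint, h.sup_eq_top, finrank_top]

variable [IsTorsionFree R M] [IsNoetherian R M]

theorem finrank_pos_of_ne_bot {p : Submodule R M} (hp : p ≠ ⊥) : 0 < finrank R p :=
  have := nontrivial_iff_ne_bot.mpr hp
  finrank_pos

theorem finrank_lt_of_isComplemented_of_ne_top {p : Submodule R M} (hp : IsComplemented p)
    (hp_top : p ≠ ⊤) : finrank R p < finrank R M := by
  obtain ⟨q, hpq⟩ := hp
  have hq : q ≠ ⊥ := fun h => hp_top (eq_top_of_isCompl_bot (h ▸ hpq))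
  have := finrank_pos_of_ne_bot hq
  have := finrank_add_finrank_of_isCompl hpq
  omega

theorem finrank_lt_finrank_of_isComplemented_of_lt {p q : Submodule R M} (hp : IsComplemented p)
    (hpq : p < q) : finrank R p < finrank R q := by
  obtain ⟨c, hc⟩ := hp
  have hq : p ⊔ q ⊓ c = q := by
    rw [inf_comm, ← sup_inf_assoc_of_le c hpq.le, hc.sup_eq_top, top_inf_eq]
  have hne : q ⊓ c ≠ ⊥ := fun h => hpq.ne (by rw [← hq, h, sup_bot_eq])
  have := finrank_pos_of_ne_bot hne
  rw [← hq, finrank_sup_of_disjoint (hc.disjoint.mono_right inf_le_right)]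
  omega

omit [IsNoetherian R M] in
theorem finrank_span_singleton_eq_one {w : M} (hw : w ≠ 0) : finrank R (R ∙ w) = 1 :=
  (LinearEquiv.toSpanNonzeroSingleton R M w hw).finrank_eq.symm.trans (finrank_self R)

end Rank

section Saturation

variable {R M : Type*} [CommRing R] [IsDomain R] [AddCommGroup M] [Module R M]

def saturation (L : Submodule R M) : Submodule R M :=
  (torsion R (M ⧸ L)).comap L.mkQ

omit [IsDomain R] in
theorem le_saturation (L : Submodule R M) : L ≤ L.saturation := fun x hx => by
  simp [saturation, (Quotient.mk_eq_zero L).mpr hx]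

def quotientTorsionEquivQuotientSaturation (L : Submodule R M) :
    ((M ⧸ L) ⧸ torsion R (M ⧸ L)) ≃ₗ[R] M ⧸ L.saturation :=
  (quotEquivOfEq _ _ (by rw [saturation, map_comap_eq, range_mkQ, top_inf_eq])).trans
    (quotientQuotientEquivQuotient L L.saturation L.le_saturation)

instance (L : Submodule R M) : IsTorsionFree R (M ⧸ L.saturation) :=
  L.quotientTorsionEquivQuotientSaturation.symm.injective.moduleIsTorsionFree _ (by simp)

theorem finrank_saturation [Module.Finite R M] (L : Submodule R M) :
    finrank R L.saturation = finrank R L := by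
  have hquot : finrank R (M ⧸ L.saturation) = finrank R (M ⧸ L) :=
    L.quotientTorsionEquivQuotientSaturation.finrank_eq.symm.trans
      (finrank_quotient_eq_of_le_torsion le_rfl)
  have := L.finrank_quotient_add_finrank
  have := L.saturation.finrank_quotient_add_finrank
  omega

end Saturation

theorem isComplemented_of_projective_quotient {R M : Type*} [Ring R] [AddCommGroup M]
    [Module R M] (p : Submodule R M) [Projective R (M ⧸ p)] : IsComplemented p := by
  obtain ⟨s, hs⟩ := p.mkQ.exists_rightInverse_of_surjective p.range_mkQ
  have hidem : IsIdempotentElem (s ∘ₗ p.mkQ) := by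
    rw [IsIdempotentElem, Module.End.mul_eq_comp, LinearMap.comp_assoc,
      ← LinearMap.comp_assoc _ s, hs, LinearMap.id_comp]
  have hker : LinearMap.ker (s ∘ₗ p.mkQ) = p := by
    rw [LinearMap.ker_comp, LinearMap.ker_eq_bot_of_inverse hs, comap_bot, ker_mkQ]
  have hcompl := LinearMap.IsIdempotentElem.isCompl hidem
  rw [hker] at hcompl
  exact ⟨_, hcompl.symm⟩

section Dedekind

variable {R M : Type*} [CommRing R] [IsDedekindDomain R] [AddCommGroup M] [Module R M]
  [Module.Finite R M]

theorem isComplemented_saturation (L : Submodule R M) : IsComplemented L.saturation := by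
  have := finitePresentation_of_finite R (M ⧸ L.saturation)
  have : Projective R (M ⧸ L.saturation) := Flat.projective_of_finitePresentation
  exact isComplemented_of_projective_quotient _

theorem exists_isComplemented_gt_finrank_eq_succ [IsTorsionFree R M] {A : Submodule R M}
    (hA : IsComplemented A) (hrank : finrank R A + 1 < finrank R M) :
    ∃ A', A < A' ∧ IsComplemented A' ∧ finrank R A' = finrank R A + 1 := by
  obtain ⟨B, hAB⟩ := hA
  have hB : B ≠ ⊥ := by
    rintro rfl
    rw [eq_top_of_isCompl_bot hAB, finrank_top] at hrank
    omega
  obtain ⟨w, hwB, hw0⟩ := B.ne_bot_iff.mp hB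
  have hdisj : Disjoint A (R ∙ w) :=
    hAB.disjoint.mono_right ((span_singleton_le_iff_mem _ _).mpr hwB)
  have hrk : finrank R (A ⊔ R ∙ w).saturation = finrank R A + 1 := by
    rw [finrank_saturation, finrank_sup_of_disjoint hdisj, finrank_span_singleton_eq_one hw0]
  refine ⟨_, lt_of_le_of_ne (le_sup_left.trans (le_saturation _)) fun h => ?_,
    isComplemented_saturation _, hrk⟩
  rw [← h] at hrk
  omega

end Dedekind

end Submodule

/-- The height of a rank-`k` proper nonzero summand `V` in `T_M^op` is `n - k - 1`. -/
theorem statement14 (Λ : Type) [CommRing Λ] [IsDedekindDomain Λ]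
    (M : Type) [AddCommGroup M] [Module Λ M] [Module.Finite Λ M] [Module.Projective Λ M]
    (n : ℕ) (hn : rk Λ M = n) (k : ℕ) (V : Submodule Λ M) (hVsum : ∃ W, V ⊓ W = ⊥ ∧ V ⊔ W = ⊤)
    (hV0 : V ≠ ⊥) (hVtop : V ≠ ⊤) (hVrk : rk Λ ↥V = k) :
    Order.height (toDual (⟨V, hVsum, hV0, hVtop⟩ : TPoset Λ M)) = ((n - k - 1 : ℕ) : ℕ∞) := by
  rw [rk_eq_finrank] at hn hVrk
  have hsum (A : TPoset Λ M) : IsComplemented A.1 :=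
    isComplemented_iff_exists_inf_eq_bot_and_sup_eq_top.mpr A.2.1
  have hf : StrictMono fun A : TPoset Λ M => finrank Λ A.1 := fun A B hAB =>
    finrank_lt_finrank_of_isComplemented_of_lt (hsum A) hAB
  have hle : ∀ A : TPoset Λ M, finrank Λ A.1 ≤ n - 1 := fun A => by
    have := finrank_lt_of_isComplemented_of_ne_top (hsum A) A.2.2.2
    omega
  have hstep : ∀ A : TPoset Λ M, finrank Λ A.1 < n - 1 →
      ∃ B, A < B ∧ finrank Λ B.1 = finrank Λ A.1 + 1 := fun A hA => by
    obtain ⟨B, hAB, hB, hrk⟩ := exists_isComplemented_gt_finrank_eq_succ (hsum A) (by omega)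
    refine ⟨⟨B, isComplemented_iff_exists_inf_eq_bot_and_sup_eq_top.mp hB,
      ne_bot_of_le_ne_bot A.2.2.1 hAB.le, fun h => ?_⟩, hAB, hrk⟩
    rw [h, finrank_top] at hrk
    omega
  rw [height_toDual, Nat.sub_right_comm, ← hVrk]
  exact le_antisymm (coheight_le_of_strictMono_nat hf hle _)
    (le_coheight_of_exists_gt_eq_succ hstep _)
end
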